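/- arXiv:2404.05033 — 3 statements merged into one kernel-verified Lean document; each statement's English description precedes it below -/
import Mathlib

section
/- For any distinct i, j, k ∈ {1,2,3}, the subgroup of A generated by {eᵢ, eⱼ, mₖ} is a Lagrangian subgroup of (A, ω); these are the condensation groups of the boundaries condensing two electric charges and one magnetic flux. -/
/-- The group of topological excitations of three copies of the 3D toric code:
pairs (a, b) of electric/magnetic labels in `(ZMod 2)³`. -/
abbrev A : Type := (Fin 3 → ZMod 2) × (Fin 3 → ZMod 2)

/-- The electric charge `eᵢ`. -/
def e (i : Fin 3) : A := (Pi.single i 1, 0)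

/-- The magnetic flux `mᵢ`. -/
def m (i : Fin 3) : A := (0, Pi.single i 1)

/-- The mutual-statistics pairing `ω((a,b),(a',b')) = a·b' + a'·b`. -/
def ω (x y : A) : ZMod 2 :=
  (∑ t, x.1 t * y.2 t) + (∑ t, y.1 t * x.2 t)

/-- The action of the S-domain wall `s⁽²⁾ᵢⱼ` on excitations:
`(a, b) ↦ (a + bⱼ•δᵢ + bᵢ•δⱼ, b)`. -/
def φ (i j : Fin 3) (x : A) : A :=
  (x.1 + x.2 j • (Pi.single i 1 : Fin 3 → ZMod 2) + x.2 i • (Pi.single j 1 : Fin 3 → ZMod 2), x.2)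

/-- A subgroup `L` of `A` is Lagrangian if it equals its orthogonal complement
with respect to the pairing `ω`. -/
def IsLagrangian (L : AddSubgroup A) : Prop :=
  (L : Set A) = {x : A | ∀ l ∈ L, ω x l = 0}

theorem stmt_4 (i j k : Fin 3) (hij : i ≠ j) (hjk : j ≠ k) (hik : i ≠ k) :
    IsLagrangian (AddSubgroup.closure {e i, e j, m k}) := by
  have hcov : ∀ t : Fin 3, t = i ∨ t = j ∨ t = k := by intro t; omega
  set S : Set A := {e i, e j, m k} with hS
  -- the explicit subgroup
  let L' : AddSubgroup A :=
    { carrier := {x : A | x.1 k = 0 ∧ x.2 i = 0 ∧ x.2 j = 0}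
      add_mem' := by
        rintro a b ⟨h1, h2, h3⟩ ⟨g1, g2, g3⟩
        simp_all [Prod.fst_add, Prod.snd_add, Pi.add_apply]
      zero_mem' := by simp
      neg_mem' := by
        rintro a ⟨h1, h2, h3⟩
        simp_all [Prod.fst_neg, Prod.snd_neg, Pi.neg_apply] }
  have hmemL' : ∀ x : A, x ∈ L' ↔ (x.1 k = 0 ∧ x.2 i = 0 ∧ x.2 j = 0) := fun x => Iff.rfl
  have heiL : e i ∈ L' := by
    rw [hmemL']; refine ⟨?_, ?_, ?_⟩ <;> simp [e, Pi.single_apply, hik.symm]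
  have hejL : e j ∈ L' := by
    rw [hmemL']; refine ⟨?_, ?_, ?_⟩ <;> simp [e, Pi.single_apply, hjk.symm]
  have hmkL : m k ∈ L' := by
    rw [hmemL']; refine ⟨?_, ?_, ?_⟩ <;> simp [m, Pi.single_apply, hik, hjk]
  have hsmul : ∀ (c : ZMod 2) (v : A), v ∈ AddSubgroup.closure S →
      c • v ∈ AddSubgroup.closure S := by
    intro c v hv
    fin_cases c
    · show (0 : ZMod 2) • v ∈ _; simpa using (AddSubgroup.closure S).zero_mem
    · show (1 : ZMod 2) • v ∈ _; simpa using hv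
  have hclo : AddSubgroup.closure S = L' := by
    apply le_antisymm
    · rw [AddSubgroup.closure_le]
      rintro x (rfl | rfl | rfl)
      · exact heiL
      · exact hejL
      · exact hmkL
    · intro x hx
      rw [hmemL'] at hx
      obtain ⟨h1, h2, h3⟩ := hx
      have hx1 : x = (x.1 i) • e i + (x.1 j) • e j + (x.2 k) • m k := by
        refine Prod.ext ?_ ?_ <;> funext t <;> rcases hcov t with rfl | rfl | rfl <;>
          simp [e, m, Pi.single_apply, hij, hjk, hik, hij.symm, hjk.symm, hik.symm, h1, h2, h3]
      rw [hx1]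
      refine AddSubgroup.add_mem _ (AddSubgroup.add_mem _ ?_ ?_) ?_ <;>
        apply hsmul <;> apply AddSubgroup.subset_closure <;> simp [hS]
  rw [hclo]
  unfold IsLagrangian
  ext x
  simp only [SetLike.mem_coe, Set.mem_setOf_eq, hmemL']
  constructor
  · rintro ⟨h1, h2, h3⟩ l hl
    obtain ⟨g1, g2, g3⟩ := (hmemL' l).mp hl
    unfold ω
    rw [Finset.sum_eq_zero, Finset.sum_eq_zero, add_zero]
    · intro t _
      rcases hcov t with rfl | rfl | rfl <;> simp [h2, h3, g1]
    · intro t _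
      rcases hcov t with rfl | rfl | rfl <;> simp [h1, g2, g3]
  · intro hx
    refine ⟨?_, ?_, ?_⟩
    · simpa [ω, m, Pi.single_apply] using hx (m k) hmkL
    · simpa [ω, e, Pi.single_apply] using hx (e i) heiL
    · simpa [ω, e, Pi.single_apply] using hx (e j) hejL
end

section
/- For any distinct i, j, k ∈ {1,2,3}, both the subgroup of A generated by {eᵢ + eⱼ, mᵢ + mⱼ, eₖ} and the subgroup generated by {eᵢ + eⱼ, mᵢ + mⱼ, mₖ} are Lagrangian subgroups of (A, ω); these are the condensation groups of the fold|e- and fold|m-boundaries, respectively. -/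
lemma ω_comm (x y : A) : ω x y = ω y x :=
  add_comm _ _

lemma ω_add_right (x y z : A) : ω x (y + z) = ω x y + ω x z := by
  simp only [ω, Prod.fst_add, Prod.snd_add, Pi.add_apply, mul_add, add_mul,
    Finset.sum_add_distrib]
  ring

@[simp]
lemma ω_e (x : A) (t : Fin 3) : ω x (e t) = x.2 t := by
  simp [ω, e, Pi.single_apply]

@[simp]
lemma ω_m (x : A) (t : Fin 3) : ω x (m t) = x.1 t := by
  simp [ω, m, Pi.single_apply]

lemma ω_eq_zero_of_mem_closure {S : Set A} {x y : A} (hx : ∀ s ∈ S, ω x s = 0)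
    (hy : y ∈ AddSubgroup.closure S) : ω x y = 0 :=
  (AddSubgroup.closure_le (AddMonoidHom.mk' (ω x) (ω_add_right x)).ker).2 hx hy

theorem isLagrangian_closure {S : Set A} (hiso : ∀ s ∈ S, ∀ t ∈ S, ω s t = 0)
    (hmax : ∀ x, (∀ s ∈ S, ω x s = 0) → x ∈ AddSubgroup.closure S) :
    IsLagrangian (AddSubgroup.closure S) := by
  ext x
  refine ⟨fun hx l hl => ?_, fun hx => hmax x fun s hs => hx s (AddSubgroup.subset_closure hs)⟩
  rw [ω_comm]
  exact ω_eq_zero_of_mem_closure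
    (fun s hs => ω_comm s l ▸ ω_eq_zero_of_mem_closure (hiso s hs) hl) hx

theorem IsLagrangian.map {L : AddSubgroup A} (hL : IsLagrangian L) (f : A ≃+ A)
    (hf : ∀ x y, ω (f x) (f y) = ω x y) : IsLagrangian (L.map f.toAddMonoidHom) := by
  have hfx : ∀ x l, ω x (f l) = ω (f.symm x) l := fun x l => by
    rw [← hf (f.symm x) l, f.apply_symm_apply]
  ext x
  rw [SetLike.mem_coe, AddSubgroup.mem_map_equiv, ← SetLike.mem_coe, hL]
  simp only [Set.mem_ofPred_eq, AddSubgroup.mem_map, forall_exists_index, and_imp]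
  exact ⟨fun h _ l hl hlx => hlx ▸ (hfx x l).trans (h l hl),
    fun h l hl => (hfx x l).symm.trans (h _ l hl rfl)⟩

lemma prodComm_e (t : Fin 3) : AddEquiv.prodComm (e t) = m t := rfl

lemma prodComm_m (t : Fin 3) : AddEquiv.prodComm (m t) = e t := rfl

lemma ω_prodComm (x y : A) : ω (AddEquiv.prodComm x) (AddEquiv.prodComm y) = ω x y := by
  simp only [ω, AddEquiv.coe_prodComm, Prod.fst_swap, Prod.snd_swap]
  simp only [mul_comm, add_comm]

section Fold

variable {i j k : Fin 3}

lemma Fin.eq_or_eq_or_eq_of_ne (hij : i ≠ j) (hjk : j ≠ k) (hik : i ≠ k) (t : Fin 3) :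
    t = i ∨ t = j ∨ t = k := by
  simp only [ne_eq, Fin.ext_iff] at *
  omega

lemma eq_smul_fold_e_generators (hij : i ≠ j) (hjk : j ≠ k) (hik : i ≠ k) {x : A}
    (h1 : x.1 j = x.1 i) (h2 : x.2 j = x.2 i) (hk : x.2 k = 0) :
    x = x.1 i • (e i + e j) + x.2 i • (m i + m j) + x.1 k • e k := by
  ext t <;> rcases Fin.eq_or_eq_or_eq_of_ne hij hjk hik t with rfl | rfl | rfl <;>
    simp [e, m, hij, hij.symm, hik, hik.symm, hjk, hjk.symm, h1, h2, hk]

theorem isLagrangian_fold_e (hij : i ≠ j) (hjk : j ≠ k) (hik : i ≠ k) :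
    IsLagrangian (AddSubgroup.closure {e i + e j, m i + m j, e k}) := by
  apply isLagrangian_closure
  · simp only [Set.mem_insert_iff, Set.mem_singleton_iff]
    rintro s (rfl | rfl | rfl) t (rfl | rfl | rfl) <;>
      simp only [ω_add_right, ω_e, ω_m] <;>
      simp [CharTwo.add_self_eq_zero, e, m, hij, hij.symm, hik, hik.symm, hjk, hjk.symm]
  · intro x hx
    simp only [Set.mem_insert_iff, Set.mem_singleton_iff, forall_eq_or_imp, forall_eq,
      ω_add_right, ω_e, ω_m] at hx
    obtain ⟨h2, h1, hk⟩ := hx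
    rw [eq_smul_fold_e_generators hij hjk hik (CharTwo.add_eq_zero.1 h1).symm
      (CharTwo.add_eq_zero.1 h2).symm hk]
    have hgen : ∀ g ∈ ({e i + e j, m i + m j, e k} : Set A), ∀ c : ZMod 2,
        c • g ∈ AddSubgroup.closure {e i + e j, m i + m j, e k} :=
      fun g hg c => ZMod.smul_mem (AddSubgroup.subset_closure hg) c
    exact add_mem (add_mem (hgen _ (by simp) _) (hgen _ (by simp) _)) (hgen _ (by simp) _)

theorem isLagrangian_fold_m (hij : i ≠ j) (hjk : j ≠ k) (hik : i ≠ k) :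
    IsLagrangian (AddSubgroup.closure {e i + e j, m i + m j, m k}) := by
  have h := (isLagrangian_fold_e hij hjk hik).map AddEquiv.prodComm ω_prodComm
  simp only [AddMonoidHom.map_closure, Set.image_insert_eq, Set.image_singleton, map_add,
    AddEquiv.coe_toAddMonoidHom, prodComm_e, prodComm_m] at h
  rwa [Set.insert_comm] at h

end Fold

theorem stmt_5 (i j k : Fin 3) (hij : i ≠ j) (hjk : j ≠ k) (hik : i ≠ k) :
    IsLagrangian (AddSubgroup.closure {e i + e j, m i + m j, e k}) ∧
    IsLagrangian (AddSubgroup.closure {e i + e j, m i + m j, m k}) :=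
  ⟨isLagrangian_fold_e hij hjk hik, isLagrangian_fold_m hij hjk hik⟩
end

section
/- For any distinct i, j, k ∈ {1,2,3}, letting L be the subgroup of A generated by {eᵢ, mⱼ, mₖ}, the image of L under φᵢⱼ equals L and the image of L under φᵢₖ equals L; i.e. the S-domain walls s⁽²⁾ᵢⱼ and s⁽²⁾ᵢₖ condense on the (eᵢ, mⱼ, mₖ)-boundary. -/
/-!
Each wall map `φ i j` is an additive involution, since over `ZMod 2` the correction
`bⱼ•δᵢ + bᵢ•δⱼ` applied twice cancels. An involutive homomorphism preserves a subgroup as soon as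
it sends its generators into it, and on `eᵢ, mⱼ, mₖ` the map `φ i j` fixes `eᵢ` and `mₖ` and sends
`mⱼ` to `eᵢ + mⱼ`; the same holds for `φ i k` with `j` and `k` exchanged.
-/

lemma Set.image_eq_self_of_involutive {α : Type*} {f : α → α} (hf : Function.Involutive f)
    {s : Set α} (hs : Set.MapsTo f s s) : f '' s = s :=
  (Set.image_subset_iff.2 hs).antisymm fun x hx => ⟨f x, hs hx, hf x⟩

lemma AddSubgroup.image_closure_eq_of_involutive {G : Type*} [AddGroup G] (f : G →+ G)
    (hf : Function.Involutive f) {s : Set G} (hs : ∀ x ∈ s, f x ∈ closure s) :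
    f '' closure s = closure s :=
  Set.image_eq_self_of_involutive hf fun _ hx => (closure_le (K := (closure s).comap f)).2 hs hx

lemma φ_add (i j : Fin 3) (x y : A) : φ i j (x + y) = φ i j x + φ i j y := by
  ext : 1
  · simp only [φ, Prod.fst_add, Prod.snd_add, Pi.add_apply, add_smul]
    abel
  · rfl

lemma φ_involutive (i j : Fin 3) : Function.Involutive (φ i j) := by
  intro x
  ext : 1
  · simp only [φ]
    rw [add_assoc _ (x.2 j • _), add_assoc x.1, CharTwo.add_cancel_right]
  · rfl

lemma φ_e (i j l : Fin 3) : φ i j (e l) = e l := by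
  simp [φ, e]

lemma φ_m_of_ne (i j l : Fin 3) (hil : i ≠ l) (hjl : j ≠ l) : φ i j (m l) = m l := by
  simp [φ, m, Pi.single_eq_of_ne hil, Pi.single_eq_of_ne hjl]

lemma φ_m_right (i j : Fin 3) (hij : i ≠ j) : φ i j (m j) = e i + m j := by
  simp [φ, e, m, Pi.single_eq_of_ne hij]

lemma φ_image_closure_eq (i j k : Fin 3) (hij : i ≠ j) (hjk : j ≠ k) (hik : i ≠ k) :
    φ i j '' ((AddSubgroup.closure {e i, m j, m k} : AddSubgroup A) : Set A) =
      ((AddSubgroup.closure {e i, m j, m k} : AddSubgroup A) : Set A) := by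
  refine AddSubgroup.image_closure_eq_of_involutive
    (AddMonoidHom.mk' (φ i j) (φ_add i j)) (φ_involutive i j) ?_
  have mem : ∀ x ∈ ({e i, m j, m k} : Set A), x ∈ AddSubgroup.closure {e i, m j, m k} :=
    fun _ hx => AddSubgroup.subset_closure hx
  rintro x (rfl | rfl | rfl) <;> change φ i j _ ∈ _
  · rw [φ_e]
    exact mem _ (by simp)
  · rw [φ_m_right i j hij]
    exact add_mem (mem _ (by simp)) (mem _ (by simp))
  · rw [φ_m_of_ne i j k hik hjk]
    exact mem _ (by simp)

theorem stmt_8 (i j k : Fin 3) (hij : i ≠ j) (hjk : j ≠ k) (hik : i ≠ k) :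
    φ i j '' ((AddSubgroup.closure {e i, m j, m k} : AddSubgroup A) : Set A) =
      ((AddSubgroup.closure {e i, m j, m k} : AddSubgroup A) : Set A) ∧
    φ i k '' ((AddSubgroup.closure {e i, m j, m k} : AddSubgroup A) : Set A) =
      ((AddSubgroup.closure {e i, m j, m k} : AddSubgroup A) : Set A) := by
  refine ⟨φ_image_closure_eq i j k hij hjk hik, ?_⟩
  rw [Set.pair_comm (m j)]
  exact φ_image_closure_eq i k j hik hjk.symm hij
end
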